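/- arXiv:0903.4475 — 2 statements merged into one kernel-verified Lean document; each statement's English description precedes it below -/
import Mathlib

section
/- Let μ be a Borel probability measure on I = [0,∞], let T > 0 and set p = μ[0,T); assume 0 < p < 1. Then for every α' ∈ [0,1], inf{ H(ν|μ) : ν a Borel probability measure on I with ν[0,T) = α' } = ħ(α',p), and the infimum is attained at the tilted measure μ*_{α'}, i.e. ħ(α',p) = H(μ*_{α'}|μ). -/
open MeasureTheory Filter Set
open scoped ENNReal NNReal Classical

noncomputable section

/-- `ħ(a,b)`: binary relative entropy (with the convention `Real.log 0 = 0`,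
so that `0 · ln 0 = 0`). -/
def hbar (a b : ℝ) : ℝ := a * Real.log (a / b) + (1 - a) * Real.log ((1 - a) / (1 - b))

/-- Relative entropy `H(ν|μ)` of Borel probability measures on `I = [0,∞]`
(realized as `ℝ≥0∞`): `∫ ln (dν/dμ) dν` if `ν ≪ μ` (the value being `∞` if the
integral diverges), and `∞` otherwise. -/
def relEntropy (ν μ : Measure ℝ≥0∞) : ℝ≥0∞ :=
  if ν ≪ μ ∧ Integrable (fun t => Real.log ((ν.rnDeriv μ t).toReal)) ν then
    ENNReal.ofReal (∫ t, Real.log ((ν.rnDeriv μ t).toReal) ∂ν)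
  else ⊤

/-- The tilted measure `μ*_a`:
`μ*_a(A) = (a/p)·μ(A ∩ [0,T)) + ((1−a)/(1−p))·μ(A ∩ [T,∞])`. -/
def tiltedMu (μ : Measure ℝ≥0∞) (T a p : ℝ) : Measure ℝ≥0∞ :=
  ENNReal.ofReal (a / p) • μ.restrict (Set.Iio (ENNReal.ofReal T)) +
    ENNReal.ofReal ((1 - a) / (1 - p)) • μ.restrict (Set.Ici (ENNReal.ofReal T))

instance tiltedMu.instIsFiniteMeasure (μ : Measure ℝ≥0∞) [IsFiniteMeasure μ] (T a p : ℝ) :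
    IsFiniteMeasure (tiltedMu μ T a p) := by
  constructor
  rw [tiltedMu]
  simp only [Measure.add_apply, Measure.smul_apply, smul_eq_mul]
  exact ENNReal.add_lt_top.mpr ⟨ENNReal.mul_lt_top ENNReal.ofReal_lt_top (measure_lt_top _ _),
    ENNReal.mul_lt_top ENNReal.ofReal_lt_top (measure_lt_top _ _)⟩

/-!
For probability measures `relEntropy` is Mathlib's `klDiv`. Restricting `ν ≪ μ` to a block `A`
and applying Gibbs' inequality there gives `∫_A log (dν/dμ) dν ≥ ν(A) log (ν(A)/μ(A))`; summing
over the blocks `[0,T)` and `[T,∞]` bounds `H(ν|μ)` below by `ħ(ν[0,T), p)`. The tilted measure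
has a density constant on each block, so it turns both inequalities into equalities.
-/

open InformationTheory

section LogSum

variable {α : Type*} [MeasurableSpace α] {μ ν : Measure α} {s : Set α}

lemma rnDeriv_restrict_restrict_ae_eq [SigmaFinite ν] [SigmaFinite μ] (hνμ : ν ≪ μ)
    (hs : MeasurableSet s) :
    (ν.restrict s).rnDeriv (μ.restrict s) =ᵐ[μ.restrict s] ν.rnDeriv μ := by
  have hν : ν.restrict s = (μ.restrict s).withDensity (ν.rnDeriv μ) := by
    rw [← restrict_withDensity hs, Measure.withDensity_rnDeriv_eq ν μ hνμ]
  rw [hν]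
  exact Measure.rnDeriv_withDensity _ (Measure.measurable_rnDeriv ν μ)

lemma mul_log_le_setIntegral_llr [IsFiniteMeasure ν] [IsFiniteMeasure μ] (hνμ : ν ≪ μ)
    (hint : Integrable (llr ν μ) ν) (hs : MeasurableSet s) :
    ν.real s * Real.log (ν.real s / μ.real s) ≤ ∫ x in s, llr ν μ x ∂ν := by
  have hllr : llr (ν.restrict s) (μ.restrict s) =ᵐ[ν.restrict s] llr ν μ := by
    filter_upwards [(hνμ.restrict s).ae_le (rnDeriv_restrict_restrict_ae_eq hνμ hs)] with x hx
    simp only [llr, hx]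
  have hint_s : Integrable (llr (ν.restrict s) (μ.restrict s)) (ν.restrict s) :=
    hint.restrict.congr hllr.symm
  have h := mul_log_le_toReal_klDiv (hνμ.restrict s) hint_s
  rw [toReal_klDiv (hνμ.restrict s) hint_s, integral_congr_ae hllr] at h
  simp only [measureReal_restrict_apply_univ] at h
  linarith

/-- The log-sum inequality for the partition `{s, sᶜ}`. -/
lemma mul_log_add_mul_log_compl_le_integral_llr [IsFiniteMeasure ν] [IsFiniteMeasure μ]
    (hνμ : ν ≪ μ) (hint : Integrable (llr ν μ) ν) (hs : MeasurableSet s) :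
    ν.real s * Real.log (ν.real s / μ.real s) + ν.real sᶜ * Real.log (ν.real sᶜ / μ.real sᶜ)
      ≤ ∫ x, llr ν μ x ∂ν := by
  rw [← integral_add_compl hs hint]
  exact add_le_add (mul_log_le_setIntegral_llr hνμ hint hs)
    (mul_log_le_setIntegral_llr hνμ hint hs.compl)

lemma ofReal_hbar_le_klDiv [IsProbabilityMeasure ν] [IsProbabilityMeasure μ]
    (hs : MeasurableSet s) : ENNReal.ofReal (hbar (ν.real s) (μ.real s)) ≤ klDiv ν μ := by
  by_cases h : ν ≪ μ ∧ Integrable (llr ν μ) ν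
  · rw [klDiv_of_ac_of_integrable h.1 h.2, probReal_univ, probReal_univ, add_sub_cancel_right]
    refine ENNReal.ofReal_le_ofReal ?_
    have := mul_log_add_mul_log_compl_le_integral_llr h.1 h.2 hs
    rwa [probReal_compl_eq_one_sub hs, probReal_compl_eq_one_sub hs] at this
  · rw [klDiv_eq_top_iff.mpr fun hac hint => h ⟨hac, hint⟩]
    exact le_top

lemma smul_restrict_add_smul_restrict_compl_eq_withDensity (μ : Measure α)
    (hs : MeasurableSet s) (c d : ℝ≥0∞) :
    c • μ.restrict s + d • μ.restrict sᶜ =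
      μ.withDensity (s.indicator (fun _ => c) + sᶜ.indicator (fun _ => d)) := by
  rw [withDensity_add_left (measurable_const.indicator hs), withDensity_indicator hs,
    withDensity_indicator hs.compl, withDensity_const, withDensity_const]

lemma smul_restrict_add_smul_restrict_compl_apply_self (μ : Measure α) (hs : MeasurableSet s)
    (c d : ℝ≥0∞) : (c • μ.restrict s + d • μ.restrict sᶜ) s = c * μ s := by
  simp [Measure.restrict_apply hs]

lemma smul_restrict_add_smul_restrict_compl_apply_compl (μ : Measure α) (hs : MeasurableSet s)
    (c d : ℝ≥0∞) : (c • μ.restrict s + d • μ.restrict sᶜ) sᶜ = d * μ sᶜ := by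
  simp [Measure.restrict_apply hs.compl]

lemma klDiv_eq_of_eq_smul_restrict_add_smul_restrict_compl [IsProbabilityMeasure ν]
    [IsProbabilityMeasure μ] (hs : MeasurableSet s) {c d : ℝ≥0∞}
    (hν : ν = c • μ.restrict s + d • μ.restrict sᶜ) :
    klDiv ν μ = ENNReal.ofReal
      (ν.real s * Real.log c.toReal + ν.real sᶜ * Real.log d.toReal) := by
  set f : α → ℝ :=
    s.indicator (fun _ => Real.log c.toReal) + sᶜ.indicator (fun _ => Real.log d.toReal)
  rw [smul_restrict_add_smul_restrict_compl_eq_withDensity μ hs] at hν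
  have hνμ : ν ≪ μ := hν ▸ withDensity_absolutelyContinuous _ _
  have hllr : llr ν μ =ᵐ[ν] f := by
    refine hνμ.ae_le ?_
    filter_upwards [hν ▸ Measure.rnDeriv_withDensity μ
      ((measurable_const.indicator hs).add (measurable_const.indicator hs.compl))] with x hx
    by_cases hxs : x ∈ s <;> simp [llr, hx, f, hxs]
  have hf : Integrable f ν := ((integrable_const _).indicator hs).add
    ((integrable_const _).indicator hs.compl)
  rw [klDiv_of_ac_of_integrable hνμ (hf.congr hllr.symm), probReal_univ, probReal_univ,
    add_sub_cancel_right, integral_congr_ae hllr, integral_add' ((integrable_const _).indicator hs)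
    ((integrable_const _).indicator hs.compl), integral_indicator_const _ hs,
    integral_indicator_const _ hs.compl, smul_eq_mul, smul_eq_mul]

end LogSum

lemma relEntropy_eq_klDiv (ν μ : Measure ℝ≥0∞) [IsProbabilityMeasure ν]
    [IsProbabilityMeasure μ] :
    relEntropy ν μ = klDiv ν μ := by
  simp [relEntropy, klDiv_def, llr_def]

section Tilted

variable {μ : Measure ℝ≥0∞} {T a p : ℝ}

lemma tiltedMu_eq_smul_restrict_add_smul_restrict_compl (μ : Measure ℝ≥0∞) (T a p : ℝ) :
    tiltedMu μ T a p = ENNReal.ofReal (a / p) • μ.restrict (Iio (ENNReal.ofReal T)) +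
      ENNReal.ofReal ((1 - a) / (1 - p)) • μ.restrict (Iio (ENNReal.ofReal T))ᶜ := by
  rw [compl_Iio, tiltedMu]

lemma tiltedMu_apply_Iio (hpμ : μ (Iio (ENNReal.ofReal T)) = ENNReal.ofReal p) (hp0 : 0 < p)
    (ha0 : 0 ≤ a) : tiltedMu μ T a p (Iio (ENNReal.ofReal T)) = ENNReal.ofReal a := by
  rw [tiltedMu_eq_smul_restrict_add_smul_restrict_compl,
    smul_restrict_add_smul_restrict_compl_apply_self _ measurableSet_Iio, hpμ,
    ← ENNReal.ofReal_mul (div_nonneg ha0 hp0.le), div_mul_cancel₀ _ hp0.ne']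

lemma tiltedMu_apply_Ici [IsProbabilityMeasure μ]
    (hpμ : μ (Iio (ENNReal.ofReal T)) = ENNReal.ofReal p) (hp0 : 0 < p) (hp1 : p < 1)
    (ha1 : a ≤ 1) : tiltedMu μ T a p (Ici (ENNReal.ofReal T)) = ENNReal.ofReal (1 - a) := by
  have hμ : μ (Iio (ENNReal.ofReal T))ᶜ = ENNReal.ofReal (1 - p) := by
    rw [prob_compl_eq_one_sub measurableSet_Iio, hpμ, ENNReal.ofReal_sub _ hp0.le,
      ENNReal.ofReal_one]
  rw [← compl_Iio, tiltedMu_eq_smul_restrict_add_smul_restrict_compl,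
    smul_restrict_add_smul_restrict_compl_apply_compl _ measurableSet_Iio, hμ,
    ← ENNReal.ofReal_mul (div_nonneg (sub_nonneg.2 ha1) (sub_nonneg.2 hp1.le)),
    div_mul_cancel₀ _ (sub_ne_zero.2 hp1.ne')]

lemma isProbabilityMeasure_tiltedMu [IsProbabilityMeasure μ]
    (hpμ : μ (Iio (ENNReal.ofReal T)) = ENNReal.ofReal p) (hp0 : 0 < p) (hp1 : p < 1)
    (ha : a ∈ Icc (0 : ℝ) 1) : IsProbabilityMeasure (tiltedMu μ T a p) := by
  constructor
  rw [← measure_add_measure_compl measurableSet_Iio, compl_Iio, tiltedMu_apply_Iio hpμ hp0 ha.1,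
    tiltedMu_apply_Ici hpμ hp0 hp1 ha.2, ← ENNReal.ofReal_add ha.1 (by linarith [ha.2])]
  norm_num

lemma relEntropy_tiltedMu [IsProbabilityMeasure μ]
    (hpμ : μ (Iio (ENNReal.ofReal T)) = ENNReal.ofReal p) (hp0 : 0 < p) (hp1 : p < 1)
    (ha : a ∈ Icc (0 : ℝ) 1) : relEntropy (tiltedMu μ T a p) μ = ENNReal.ofReal (hbar a p) := by
  have := isProbabilityMeasure_tiltedMu hpμ hp0 hp1 ha
  have h1a : 0 ≤ 1 - a := sub_nonneg.2 ha.2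
  rw [relEntropy_eq_klDiv, klDiv_eq_of_eq_smul_restrict_add_smul_restrict_compl measurableSet_Iio
    (tiltedMu_eq_smul_restrict_add_smul_restrict_compl μ T a p), compl_Iio, measureReal_def,
    measureReal_def, tiltedMu_apply_Iio hpμ hp0 ha.1, tiltedMu_apply_Ici hpμ hp0 hp1 ha.2,
    ENNReal.toReal_ofReal ha.1, ENNReal.toReal_ofReal h1a,
    ENNReal.toReal_ofReal (div_nonneg ha.1 hp0.le),
    ENNReal.toReal_ofReal (div_nonneg h1a (sub_nonneg.2 hp1.le)), hbar]

end Tilted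

theorem stmt1_general (μ : Measure ℝ≥0∞) [IsProbabilityMeasure μ] (T p : ℝ)
    (hpμ : μ (Set.Iio (ENNReal.ofReal T)) = ENNReal.ofReal p)
    (hp0 : 0 < p) (hp1 : p < 1) :
    ∀ α' ∈ Set.Icc (0 : ℝ) 1,
      sInf {x : ℝ≥0∞ | ∃ ν : Measure ℝ≥0∞, IsProbabilityMeasure ν ∧
          ν (Set.Iio (ENNReal.ofReal T)) = ENNReal.ofReal α' ∧ x = relEntropy ν μ}
        = ENNReal.ofReal (hbar α' p) ∧
      relEntropy (tiltedMu μ T α' p) μ = ENNReal.ofReal (hbar α' p) := by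
  intro a ha
  have hent := relEntropy_tiltedMu hpμ hp0 hp1 ha
  refine ⟨le_antisymm ?_ (le_sInf ?_), hent⟩
  · exact sInf_le ⟨_, isProbabilityMeasure_tiltedMu hpμ hp0 hp1 ha,
      tiltedMu_apply_Iio hpμ hp0 ha.1, hent.symm⟩
  · rintro _ ⟨ν, hν, hνS, rfl⟩
    have hreal : ∀ {m : Measure ℝ≥0∞} {r : ℝ}, 0 ≤ r →
        m (Iio (ENNReal.ofReal T)) = ENNReal.ofReal r → m.real (Iio (ENNReal.ofReal T)) = r :=
      fun hr hm => by rw [measureReal_def, hm, ENNReal.toReal_ofReal hr]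
    rw [relEntropy_eq_klDiv, ← hreal ha.1 hνS, ← hreal hp0.le hpμ]
    exact ofReal_hbar_le_klDiv measurableSet_Iio

theorem stmt1 (μ : Measure ℝ≥0∞) [IsProbabilityMeasure μ] (T p : ℝ)
    (hT : 0 < T) (hpμ : μ (Set.Iio (ENNReal.ofReal T)) = ENNReal.ofReal p)
    (hp0 : 0 < p) (hp1 : p < 1) :
    ∀ α' ∈ Set.Icc (0 : ℝ) 1,
      sInf {x : ℝ≥0∞ | ∃ ν : Measure ℝ≥0∞, IsProbabilityMeasure ν ∧
          ν (Set.Iio (ENNReal.ofReal T)) = ENNReal.ofReal α' ∧ x = relEntropy ν μ}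
        = ENNReal.ofReal (hbar α' p) ∧
      relEntropy (tiltedMu μ T α' p) μ = ENNReal.ofReal (hbar α' p) :=
  stmt1_general μ T p hpμ hp0 hp1

end
end

section
/- Assume p = μ[0,T) ∈ (0,1) and 0 < α < β ≤ 1 with α < 1. Let P = μ^{⊗N} and P̃_N = (μ*_α)^{⊗N} be the N-fold product measures on I^N with coordinates τ_1,…,τ_N, let κ = ln( (α(1−p)) / ((1−α)p) ) and γ_N = N·(L^{(N)}_{T−} − α), where L^{(N)}_{T−} = (1/N)·#{n ≤ N : τ_n < T}. Then E_P[P^prot_N] = e^{−N·ħ(α,p)} · E_{P̃_N}[ P^prot_N · e^{−κ·γ_N} · 1_{{γ_N > 0}} ]. -/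
open MeasureTheory Filter Set
open scoped ENNReal NNReal Classical

noncomputable section


/-- The notional loss `L^{(N)}_t = (1/N)·#{n : τ_n ≤ t}`. -/
def lossAt (N : ℕ) (τ : Fin N → ℝ≥0∞) (t : ℝ) : ℝ :=
  ((Finset.univ.filter fun n => τ n ≤ ENNReal.ofReal t).card : ℝ) / N

/-- The loss just before expiry, `L^{(N)}_{T−} = (1/N)·#{n : τ_n < T}`. -/
def lossTm (N : ℕ) (T : ℝ) (τ : Fin N → ℝ≥0∞) : ℝ :=
  ((Finset.univ.filter fun n => τ n < ENNReal.ofReal T).card : ℝ) / N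

/-- The tranching function `x ↦ ((x−α)⁺ − (x−β)⁺)/(β−α)`. -/
def tranche (α β x : ℝ) : ℝ := (max (x - α) 0 - max (x - β) 0) / (β - α)

/-- The tranched loss just before expiry, `L̄^{(N)}_{T−} = sup_{t<T} L̄^{(N)}_t`. -/
def trancheTm (N : ℕ) (T α β : ℝ) (τ : Fin N → ℝ≥0∞) : ℝ :=
  ⨆ t : Set.Iio T, tranche α β (lossAt N τ t)

/-- The protection-leg value
`P^prot_N = e^{−RT}·L̄^{(N)}_{T−} + R·∫_{(0,T)} e^{−Rs}·L̄^{(N)}_s ds`. -/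
def Pprot (N : ℕ) (T R α β : ℝ) (τ : Fin N → ℝ≥0∞) : ℝ :=
  Real.exp (-(R * T)) * trancheTm N T α β τ +
    R * ∫ s in Set.Ioo (0 : ℝ) T, Real.exp (-(R * s)) * tranche α β (lossAt N τ s)

/-!
Change of measure on `I^N`. The density of `μ*_α` with respect to `μ` is `α/p` on `[0,T)` and
`(1-α)/(1-p)` on `[T,∞]`, so the product measure `P̃_N` has density
`(α/p)^k ((1-α)/(1-p))^(N-k) = exp (N ħ(α,p) + κ γ_N)` with respect to `P`, where `k = N L_{T-}`.
This cancels the weight `e^{-N ħ(α,p)} e^{-κ γ_N}` exactly, and the indicator `γ_N > 0` costs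
nothing because the tranched loss, hence `P^prot_N`, vanishes when `L_{T-} ≤ α`.
-/

theorem MeasureTheory.lintegral_fin_prod_eq_prod {n : ℕ} {E : Type*} [MeasurableSpace E]
    {μ : Fin n → Measure E} [∀ i, SigmaFinite (μ i)]
    {f : Fin n → E → ℝ≥0∞} (hf : ∀ i, Measurable (f i)) :
    ∫⁻ x, ∏ i, f i (x i) ∂(Measure.pi μ) = ∏ i, ∫⁻ x, f i x ∂(μ i) := by
  induction n with
  | zero => simp
  | succ n ih =>
    calc
      _ = ∫⁻ x : E × (Fin n → E), f 0 x.1 * ∏ i : Fin n, f i.succ (x.2 i)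
            ∂((μ 0).prod (Measure.pi fun i ↦ μ i.succ)) := by
        rw [← ((measurePreserving_piFinSuccAbove μ 0).symm).lintegral_comp_emb
          (MeasurableEquiv.measurableEmbedding _)]
        simp_rw [MeasurableEquiv.piFinSuccAbove_symm_apply, Fin.insertNthEquiv,
          Fin.prod_univ_succ, Fin.insertNth_zero, Equiv.coe_fn_mk, Fin.cons_succ,
          Fin.cons_zero]
        rfl
      _ = (∫⁻ x, f 0 x ∂μ 0) * ∏ i : Fin n, ∫⁻ x, f i.succ x ∂(μ i.succ) := by
        rw [← ih fun i : Fin n ↦ hf i.succ]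
        exact lintegral_prod_mul (hf 0).aemeasurable (Finset.measurable_prod _
          fun (i : Fin n) _ ↦ (hf i.succ).comp (measurable_pi_apply i)).aemeasurable
      _ = _ := (Fin.prod_univ_succ fun i ↦ ∫⁻ x, f i x ∂(μ i)).symm

theorem MeasureTheory.lintegral_fintype_prod_eq_prod {ι : Type*} [Fintype ι] {E : Type*}
    [MeasurableSpace E] {μ : ι → Measure E} [∀ i, SigmaFinite (μ i)]
    {f : ι → E → ℝ≥0∞} (hf : ∀ i, Measurable (f i)) :
    ∫⁻ x, ∏ i, f i (x i) ∂(Measure.pi μ) = ∏ i, ∫⁻ x, f i x ∂(μ i) := by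
  let e := (Fintype.equivFin ι).symm
  rw [← (measurePreserving_piCongrLeft μ e).lintegral_comp_emb
    (MeasurableEquiv.measurableEmbedding _)]
  simp_rw [← e.prod_comp, MeasurableEquiv.coe_piCongrLeft, Equiv.piCongrLeft_apply_apply]
  exact lintegral_fin_prod_eq_prod fun i ↦ hf (e i)

theorem MeasureTheory.Measure.pi_withDensity {ι : Type*} [Fintype ι] {E : Type*}
    [MeasurableSpace E] {μ : ι → Measure E} [∀ i, SigmaFinite (μ i)]
    {f : ι → E → ℝ≥0∞} (hf : ∀ i, Measurable (f i)) [∀ i, SigmaFinite ((μ i).withDensity (f i))] :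
    Measure.pi (fun i ↦ (μ i).withDensity (f i))
      = (Measure.pi μ).withDensity (fun x ↦ ∏ i, f i (x i)) := by
  refine Measure.pi_eq fun s hs ↦ ?_
  rw [withDensity_apply _ (MeasurableSet.univ_pi hs), Measure.restrict_pi_pi,
    lintegral_fintype_prod_eq_prod hf]
  exact Finset.prod_congr rfl fun i _ ↦ (withDensity_apply _ (hs i)).symm

lemma tranche_eq_zero_of_le {α β x : ℝ} (hαβ : α ≤ β) (hx : x ≤ α) : tranche α β x = 0 := by
  rw [tranche, max_eq_right (by linarith), max_eq_right (by linarith), sub_zero, zero_div]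

section Loss

variable {N : ℕ} {T : ℝ}

lemma lossAt_le_lossTm (hT : 0 < T) (τ : Fin N → ℝ≥0∞) {t : ℝ} (ht : t < T) :
    lossAt N τ t ≤ lossTm N T τ := by
  refine div_le_div_of_nonneg_right ?_ (Nat.cast_nonneg N)
  refine Nat.cast_le.2 (Finset.card_le_card fun n hn ↦ ?_)
  simp only [Finset.mem_filter, Finset.mem_univ, true_and] at hn ⊢
  exact hn.trans_lt (ENNReal.ofReal_lt_ofReal_iff'.2 ⟨ht, hT⟩)

lemma natCast_mul_lossTm (τ : Fin N → ℝ≥0∞) :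
    N * lossTm N T τ = (Finset.univ.filter fun n ↦ τ n < ENNReal.ofReal T).card := by
  rcases Nat.eq_zero_or_pos N with rfl | hN
  · simp
  · exact mul_div_cancel₀ _ (Nat.cast_ne_zero.2 hN.ne')

lemma natCast_mul_lossTm_sub_pos {α : ℝ} (hα : 0 < α) {τ : Fin N → ℝ≥0∞} (h : α < lossTm N T τ) :
    0 < N * (lossTm N T τ - α) := by
  have hN : N ≠ 0 := by
    rintro rfl
    simp only [lossTm, CharP.cast_eq_zero, div_zero] at h
    exact h.not_gt hα
  exact mul_pos (Nat.cast_pos.2 (Nat.pos_of_ne_zero hN)) (sub_pos.2 h)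

lemma Pprot_eq_zero_of_lossTm_le {R α β : ℝ} (hT : 0 < T) (hαβ : α ≤ β)
    {τ : Fin N → ℝ≥0∞} (hτ : lossTm N T τ ≤ α) : Pprot N T R α β τ = 0 := by
  have htranche : ∀ t < T, tranche α β (lossAt N τ t) = 0 := fun t ht ↦
    tranche_eq_zero_of_le hαβ ((lossAt_le_lossTm hT τ ht).trans hτ)
  have hsup : trancheTm N T α β τ = 0 := by
    simp only [trancheTm, fun t : Iio T ↦ htranche t t.2, Real.iSup_const_zero]
  have hint : ∫ s in Ioo 0 T, Real.exp (-(R * s)) * tranche α β (lossAt N τ s) = 0 :=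
    setIntegral_eq_zero_of_forall_eq_zero fun s hs ↦ by rw [htranche s hs.2, mul_zero]
  rw [Pprot, hsup, hint, mul_zero, mul_zero, add_zero]

end Loss

def tiltDensity (T a p : ℝ) (t : ℝ≥0∞) : ℝ :=
  if t < ENNReal.ofReal T then a / p else (1 - a) / (1 - p)

lemma measurable_tiltDensity (T a p : ℝ) : Measurable (tiltDensity T a p) :=
  Measurable.ite measurableSet_Iio measurable_const measurable_const

lemma tiltDensity_nonneg {T a p : ℝ} (ha0 : 0 ≤ a) (ha1 : a ≤ 1) (hp0 : 0 ≤ p) (hp1 : p ≤ 1)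
    (t : ℝ≥0∞) : 0 ≤ tiltDensity T a p t := by
  unfold tiltDensity
  split_ifs
  exacts [div_nonneg ha0 hp0, div_nonneg (sub_nonneg.2 ha1) (sub_nonneg.2 hp1)]

lemma tiltedMu_eq_withDensity (μ : Measure ℝ≥0∞) (T a p : ℝ) :
    tiltedMu μ T a p = μ.withDensity fun t ↦ ENNReal.ofReal (tiltDensity T a p t) := by
  have hsplit : (fun t ↦ ENNReal.ofReal (tiltDensity T a p t))
      = (Iio (ENNReal.ofReal T)).indicator (fun _ ↦ ENNReal.ofReal (a / p))
        + (Ici (ENNReal.ofReal T)).indicator (fun _ ↦ ENNReal.ofReal ((1 - a) / (1 - p))) := by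
    ext t
    by_cases ht : t < ENNReal.ofReal T <;> simp [tiltDensity, ht, not_lt.1]
  rw [hsplit, withDensity_add_left (measurable_const.indicator measurableSet_Iio),
    withDensity_indicator measurableSet_Iio, withDensity_indicator measurableSet_Ici,
    withDensity_const, withDensity_const, tiltedMu]

lemma pi_tiltedMu_eq_withDensity {N : ℕ} (μ : Measure ℝ≥0∞) [IsFiniteMeasure μ] (T a p : ℝ) :
    Measure.pi (fun _ : Fin N ↦ tiltedMu μ T a p)
      = (Measure.pi fun _ : Fin N ↦ μ).withDensity
          fun τ ↦ ∏ n, ENNReal.ofReal (tiltDensity T a p (τ n)) := by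
  have : SigmaFinite (μ.withDensity fun t ↦ ENNReal.ofReal (tiltDensity T a p t)) := by
    rw [← tiltedMu_eq_withDensity]; infer_instance
  rw [← Measure.pi_withDensity fun _ ↦ (measurable_tiltDensity T a p).ennreal_ofReal]
  congr 1
  ext1 _
  exact tiltedMu_eq_withDensity μ T a p

lemma prod_tiltDensity {N : ℕ} (T a p : ℝ) (τ : Fin N → ℝ≥0∞) :
    ∏ n, tiltDensity T a p (τ n)
      = (a / p) ^ (Finset.univ.filter fun n ↦ τ n < ENNReal.ofReal T).card
        * ((1 - a) / (1 - p)) ^ (N - (Finset.univ.filter fun n ↦ τ n < ENNReal.ofReal T).card) := by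
  have hcard := Finset.card_filter_add_card_filter_not (s := Finset.univ)
    (fun n : Fin N ↦ τ n < ENNReal.ofReal T)
  rw [Finset.card_univ, Fintype.card_fin] at hcard
  simp only [tiltDensity, Finset.prod_ite, Finset.prod_const, ← hcard, Nat.add_sub_cancel_left]

lemma tilt_likelihood_ratio_eq_exp {N k : ℕ} (hk : k ≤ N) {a p : ℝ} (ha0 : 0 < a) (ha1 : a < 1)
    (hp0 : 0 < p) (hp1 : p < 1) :
    (a / p) ^ k * ((1 - a) / (1 - p)) ^ (N - k)
      = Real.exp (N * hbar a p + Real.log (a * (1 - p) / ((1 - a) * p)) * (k - N * a)) := by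
  have hpos₁ : 0 < a / p := div_pos ha0 hp0
  have hpos₂ : 0 < (1 - a) / (1 - p) := div_pos (sub_pos.2 ha1) (sub_pos.2 hp1)
  have hκ : Real.log (a * (1 - p) / ((1 - a) * p))
      = Real.log (a / p) - Real.log ((1 - a) / (1 - p)) := by
    rw [← Real.log_div hpos₁.ne' hpos₂.ne']
    congr 1
    field_simp
  rw [← Real.exp_log (by positivity : 0 < (a / p) ^ k * ((1 - a) / (1 - p)) ^ (N - k)),
    Real.log_mul (by positivity) (by positivity), Real.log_pow, Real.log_pow, hbar, hκ,
    Nat.cast_sub hk]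
  ring_nf

lemma Pprot_eq_exp_mul_tiltDensity_mul {N : ℕ} {T R α β p : ℝ} (hT : 0 < T) (hαβ : α ≤ β)
    (hα0 : 0 < α) (hα1 : α < 1) (hp0 : 0 < p) (hp1 : p < 1) (τ : Fin N → ℝ≥0∞) :
    Pprot N T R α β τ = Real.exp (-(N * hbar α p)) * ((∏ n, tiltDensity T α p (τ n)) *
      if 0 < (N : ℝ) * (lossTm N T τ - α) then
        Pprot N T R α β τ * Real.exp (-(Real.log ((α * (1 - p)) / ((1 - α) * p)) *
          ((N : ℝ) * (lossTm N T τ - α))))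
      else 0) := by
  split_ifs with hγ
  · have hk : (Finset.univ.filter fun n ↦ τ n < ENNReal.ofReal T).card ≤ N :=
      (Finset.card_le_univ _).trans_eq (Fintype.card_fin N)
    have hcancel : ∀ x y z : ℝ, z = Real.exp (-x) * (Real.exp (x + y) * (z * Real.exp (-y))) :=
      fun x y z ↦ by rw [Real.exp_add, Real.exp_neg, Real.exp_neg]; field_simp
    rw [mul_sub (N : ℝ), natCast_mul_lossTm, prod_tiltDensity,
      tilt_likelihood_ratio_eq_exp hk hα0 hα1 hp0 hp1]
    exact hcancel _ _ _
  · rw [mul_zero, mul_zero]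
    exact Pprot_eq_zero_of_lossTm_le hT hαβ
      (le_of_not_gt fun h ↦ hγ (natCast_mul_lossTm_sub_pos hα0 h))

theorem stmt5_general (μ : Measure ℝ≥0∞) [IsProbabilityMeasure μ] (T R p α β : ℝ)
    (hT : 0 < T)
    (hp0 : 0 < p) (hp1 : p < 1)
    (hα0 : 0 < α) (hαβ : α < β) (hα1 : α < 1) (N : ℕ) :
    ∫ τ, Pprot N T R α β τ ∂(Measure.pi fun _ : Fin N => μ)
      = Real.exp (-(N * hbar α p)) *
        ∫ τ, (if 0 < (N : ℝ) * (lossTm N T τ - α) then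
            Pprot N T R α β τ *
              Real.exp (-(Real.log ((α * (1 - p)) / ((1 - α) * p)) *
                ((N : ℝ) * (lossTm N T τ - α))))
          else 0) ∂(Measure.pi fun _ : Fin N => tiltedMu μ T α p) := by
  have hmeas : Measurable fun τ : Fin N → ℝ≥0∞ ↦ ∏ n, ENNReal.ofReal (tiltDensity T α p (τ n)) :=
    Finset.measurable_prod _ fun n _ ↦
      ((measurable_tiltDensity T α p).comp (measurable_pi_apply n)).ennreal_ofReal
  rw [pi_tiltedMu_eq_withDensity, integral_withDensity_eq_integral_toReal_smul hmeas
      (ae_of_all _ fun τ ↦ ENNReal.prod_lt_top fun n _ ↦ ENNReal.ofReal_lt_top),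
    ← integral_const_mul]
  refine integral_congr_ae (ae_of_all _ fun τ ↦ ?_)
  simp only [smul_eq_mul, ENNReal.toReal_prod, ENNReal.toReal_ofReal
    (tiltDensity_nonneg hα0.le hα1.le hp0.le hp1.le _)]
  exact Pprot_eq_exp_mul_tiltDensity_mul hT hαβ.le hα0 hα1 hp0 hp1 τ

theorem stmt5 (μ : Measure ℝ≥0∞) [IsProbabilityMeasure μ] (T R p α β : ℝ)
    (hT : 0 < T) (hR : 0 ≤ R)
    (hpμ : μ (Set.Iio (ENNReal.ofReal T)) = ENNReal.ofReal p)
    (hp0 : 0 < p) (hp1 : p < 1)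
    (hα0 : 0 < α) (hαβ : α < β) (hβ1 : β ≤ 1) (hα1 : α < 1) (N : ℕ) :
    ∫ τ, Pprot N T R α β τ ∂(Measure.pi fun _ : Fin N => μ)
      = Real.exp (-(N * hbar α p)) *
        ∫ τ, (if 0 < (N : ℝ) * (lossTm N T τ - α) then
            Pprot N T R α β τ *
              Real.exp (-(Real.log ((α * (1 - p)) / ((1 - α) * p)) *
                ((N : ℝ) * (lossTm N T τ - α))))
          else 0) ∂(Measure.pi fun _ : Fin N => tiltedMu μ T α p) :=
  stmt5_general μ T R p α β hT hp0 hp1 hα0 hαβ hα1 N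

end
end
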